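/- arXiv:math/0011172 — 2 statements merged into one kernel-verified Lean document; each statement's English description precedes it below -/
import Mathlib

section
/- Let U_{[h]} be the homogenized universal enveloping algebra of su(2) with basis X, Y, Z satisfying [X,Y] = Z, [Y,Z] = X, [Z,X] = Y, let I_{[h]} = (X²+Y²+Z² − 1), and define the star product on ℂ[x,y,z]/(x²+y²+z²−1) by the module isomorphism ψ̃(xⁿyᵐz^ν) = XⁿYᵐZ^ν for ν ∈ {0,1}. Then for monomials p₁ = xⁿyᵐ and p₂ = xʳyˢ (not involving z), one has p₁ ⋆ p₂ = p₁p₂ − h·z·∂_y(p₁)·∂_x(p₂) mod h², i.e. xⁿyᵐ ⋆ xʳyˢ = x^{n+r}y^{m+s} − h·m·r·z·x^{n+r−1}y^{m+s−1} mod h². -/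
/- STATEMENT 11: In `U_{[h]}/(X²+Y²+Z²−1)` for su(2) (basis `X, Y, Z` with
`[X,Y]=Z`, `[Y,Z]=X`, `[Z,X]=Y`), with the star product on
`ℂ[x,y,z]/(x²+y²+z²−1)` defined by the module isomorphism
`ψ̃(xⁿyᵐz^ν) = XⁿYᵐZ^ν` (ν = 0,1), one has for monomials not involving `z`:
`xⁿyᵐ ⋆ xʳyˢ = x^{n+r}y^{m+s} − h·m·r·z·x^{n+r−1}y^{m+s−1}  mod h².`
Equivalently, in the quotient algebra,
`XⁿYᵐ · XʳYˢ = X^{n+r}Y^{m+s} − h·m·r·Z·X^{n+r−1}Y^{m+s−1} + h²·u`. -/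

set_option synthInstance.maxHeartbeats 1000000
set_option maxSynthPendingDepth 3
set_option maxHeartbeats 1000000
noncomputable section

open TensorAlgebra
open scoped TensorProduct

section auxgen
variable {A : Type*} [Ring A] [Algebra (PowerSeries ℂ) A]

local notation "hh" => (PowerSeries.X : PowerSeries ℂ)

instance psNatAlg : Algebra ℕ (PowerSeries ℂ) := Semiring.toNatAlgebra

instance psIntAlg : Algebra ℤ (PowerSeries ℂ) := Ring.toIntAlgebra _

lemma aux_swap_pow {a b c : A} (hab : b * a = a * b + hh • c) (n : ℕ) :
    ∃ w : A, b * a ^ n = a ^ n * b + hh • w := by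
  induction n with
  | zero => exact ⟨0, by simp⟩
  | succ n ih =>
    obtain ⟨w, hw⟩ := ih
    refine ⟨a ^ n * c + w * a, ?_⟩
    calc b * a ^ (n + 1) = (b * a ^ n) * a := by rw [pow_succ, ← mul_assoc]
      _ = (a ^ n * b + hh • w) * a := by rw [hw]
      _ = a ^ n * (b * a) + hh • (w * a) := by
          rw [add_mul, smul_mul_assoc, mul_assoc]
      _ = a ^ n * (a * b) + (hh • (a ^ n * c) + hh • (w * a)) := by
          rw [hab, mul_add, mul_smul_comm, add_assoc]
      _ = a ^ (n + 1) * b + hh • (a ^ n * c + w * a) := by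
          rw [← mul_assoc, ← pow_succ, smul_add]

lemma aux_y_xpow {x y z : A} (hyx : y * x = x * y - hh • z)
    (hxz : x * z = z * x - hh • y) (r : ℕ) :
    ∃ u : A, y * x ^ (r + 1) =
      x ^ (r + 1) * y - (r + 1) • hh • (z * x ^ r) + hh • hh • u := by
  induction r with
  | zero => exact ⟨0, by simp [hyx, sub_eq_add_neg]⟩
  | succ r ih =>
    obtain ⟨u, hu⟩ := ih
    obtain ⟨w, hw⟩ := aux_swap_pow (a := x) (b := z) (c := y)
      (by rw [hxz, sub_add_cancel]) (r + 1)
    refine ⟨u * x + w, ?_⟩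
    have hxz' : x ^ (r + 1) * z = z * x ^ (r + 1) - hh • w := by
      rw [hw]; ring_nf; rw [add_sub_cancel_right]
    calc y * x ^ (r + 2) = (y * x ^ (r + 1)) * x := by rw [pow_succ, ← mul_assoc]
      _ = (x ^ (r + 1) * y - (r + 1) • hh • (z * x ^ r) + hh • hh • u) * x := by rw [hu]
      _ = x ^ (r + 1) * (y * x) - (r + 1) • hh • (z * x ^ (r + 1))
            + hh • hh • (u * x) := by
          rw [add_mul, sub_mul, smul_mul_assoc, smul_mul_assoc, smul_mul_assoc,
            smul_mul_assoc, mul_assoc, mul_assoc, ← pow_succ]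
      _ = x ^ (r + 2) * y - hh • (x ^ (r + 1) * z) - (r + 1) • hh • (z * x ^ (r + 1))
            + hh • hh • (u * x) := by
          rw [hyx, mul_sub, mul_smul_comm, ← mul_assoc, ← pow_succ, sub_sub]
      _ = x ^ (r + 2) * y - (r + 2) • hh • (z * x ^ (r + 1)) + hh • hh • (u * x + w) := by
          rw [hxz']; module

lemma aux_main {x y z : A} (hyx : y * x = x * y - hh • z)
    (hzy : z * y = y * z - hh • x) (hxz : x * z = z * x - hh • y) (m r : ℕ) :
    ∃ u : A, y ^ (m + 1) * x ^ (r + 1) =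
      x ^ (r + 1) * y ^ (m + 1) - ((m + 1) * (r + 1)) • hh • (z * x ^ r * y ^ m)
        + hh • hh • u := by
  induction m with
  | zero =>
    obtain ⟨u, hu⟩ := aux_y_xpow hyx hxz r
    exact ⟨u, by simpa using hu⟩
  | succ m ih =>
    obtain ⟨u, hu⟩ := ih
    obtain ⟨u2, hu2⟩ := aux_y_xpow hyx hxz r
    obtain ⟨w1, hw1⟩ := aux_swap_pow (a := x) (b := y) (c := -z)
      (by rw [hyx, smul_neg, sub_eq_add_neg]) r
    have hyz : y * z = z * y + hh • x := by rw [hzy, sub_add_cancel]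
    refine ⟨u2 * y ^ (m + 1) + y * u
      - ((m + 1) * (r + 1)) • (z * w1 * y ^ m + x ^ (r + 1) * y ^ m), ?_⟩
    have key : y * (z * x ^ r * y ^ m) =
        z * x ^ r * y ^ (m + 1) + hh • (z * w1 * y ^ m + x ^ (r + 1) * y ^ m) := by
      calc y * (z * x ^ r * y ^ m) = (y * z) * x ^ r * y ^ m := by
            rw [← mul_assoc, ← mul_assoc]
        _ = z * (y * x ^ r) * y ^ m + hh • (x ^ (r + 1) * y ^ m) := by
            rw [hyz, add_mul, add_mul, smul_mul_assoc, smul_mul_assoc,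
              mul_assoc z y, pow_succ', mul_assoc]
        _ = z * (x ^ r * y + hh • w1) * y ^ m + hh • (x ^ (r + 1) * y ^ m) := by
            rw [hw1]
        _ = z * x ^ r * y ^ (m + 1) + hh • (z * w1 * y ^ m + x ^ (r + 1) * y ^ m) := by
            rw [mul_add, add_mul, mul_smul_comm, smul_mul_assoc, smul_add,
              ← mul_assoc, mul_assoc _ y, ← pow_succ']
            module
    calc y ^ (m + 2) * x ^ (r + 1) = y * (y ^ (m + 1) * x ^ (r + 1)) := by
          rw [← mul_assoc, ← pow_succ']
      _ = y * (x ^ (r + 1) * y ^ (m + 1)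
            - ((m + 1) * (r + 1)) • hh • (z * x ^ r * y ^ m) + hh • hh • u) := by
          rw [hu]
      _ = (y * x ^ (r + 1)) * y ^ (m + 1)
            - ((m + 1) * (r + 1)) • hh • (y * (z * x ^ r * y ^ m))
            + hh • hh • (y * u) := by
          rw [mul_add, mul_sub, mul_smul_comm, mul_smul_comm, mul_smul_comm,
            mul_smul_comm, ← mul_assoc]
      _ = (x ^ (r + 1) * y - (r + 1) • hh • (z * x ^ r) + hh • hh • u2) * y ^ (m + 1)
            - ((m + 1) * (r + 1)) • hh • (z * x ^ r * y ^ (m + 1)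
                + hh • (z * w1 * y ^ m + x ^ (r + 1) * y ^ m))
            + hh • hh • (y * u) := by
          rw [hu2, key]
      _ = x ^ (r + 1) * y ^ (m + 2)
            - ((m + 2) * (r + 1)) • hh • (z * x ^ r * y ^ (m + 1))
            + hh • hh • (u2 * y ^ (m + 1) + y * u
              - ((m + 1) * (r + 1)) • (z * w1 * y ^ m + x ^ (r + 1) * y ^ m)) := by
          rw [add_mul, sub_mul, smul_mul_assoc, smul_mul_assoc, smul_mul_assoc,
            smul_mul_assoc, mul_assoc, ← pow_succ']
          have hms : (m + 2) * (r + 1) = (m + 1) * (r + 1) + (r + 1) := by ring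
          rw [hms, add_nsmul]
          module

end auxgen

variable (L : Type*) [LieRing L] [LieAlgebra ℂ L]

def hrel : TensorAlgebra (PowerSeries ℂ) ((PowerSeries ℂ) ⊗[ℂ] L) →
    TensorAlgebra (PowerSeries ℂ) ((PowerSeries ℂ) ⊗[ℂ] L) → Prop := fun a b =>
  ∃ x y : (PowerSeries ℂ) ⊗[ℂ] L,
    a = ι (PowerSeries ℂ) x * ι (PowerSeries ℂ) y
        - ι (PowerSeries ℂ) y * ι (PowerSeries ℂ) x ∧
    b = (PowerSeries.X : PowerSeries ℂ) • ι (PowerSeries ℂ) ⁅x, y⁆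

/-- The formal homogenized enveloping algebra `U_{[h]}`. -/
abbrev Uh := RingQuot (hrel L)

def genU (x : L) : Uh L :=
  RingQuot.mkAlgHom (PowerSeries ℂ) (hrel L)
    (ι (PowerSeries ℂ) ((1 : PowerSeries ℂ) ⊗ₜ[ℂ] x))

/-- The quotient `U_{[h]}/(P − 1)` by the two-sided ideal generated by `P − 1`. -/
abbrev quotOrbit (P : Uh L) :=
  RingQuot (fun a b : Uh L => a = P - 1 ∧ b = 0)

/-- Generators of the quotient algebra. -/
def genQ (P : Uh L) (x : L) : quotOrbit L P :=
  RingQuot.mkAlgHom (PowerSeries ℂ) _ (genU L x)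

lemma genU_rel (a b c : L) (h : ⁅a, b⁆ = c) :
    genU L a * genU L b - genU L b * genU L a =
      (PowerSeries.X : PowerSeries ℂ) • genU L c := by
  have h1 : hrel L
      (ι (PowerSeries ℂ) ((1 : PowerSeries ℂ) ⊗ₜ[ℂ] a) *
        ι (PowerSeries ℂ) ((1 : PowerSeries ℂ) ⊗ₜ[ℂ] b) -
       ι (PowerSeries ℂ) ((1 : PowerSeries ℂ) ⊗ₜ[ℂ] b) *
        ι (PowerSeries ℂ) ((1 : PowerSeries ℂ) ⊗ₜ[ℂ] a))
      ((PowerSeries.X : PowerSeries ℂ) •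
        ι (PowerSeries ℂ) ((1 : PowerSeries ℂ) ⊗ₜ[ℂ] c)) := by
    refine ⟨(1 : PowerSeries ℂ) ⊗ₜ[ℂ] a, (1 : PowerSeries ℂ) ⊗ₜ[ℂ] b, rfl, ?_⟩
    rw [LieAlgebra.ExtendScalars.bracket_tmul, one_mul, h]
  have h2 := RingQuot.mkAlgHom_rel (PowerSeries ℂ) h1
  simpa only [map_sub, map_mul, map_smul, genU] using h2

lemma genQ_rel (P : Uh L) (a b c : L) (h : ⁅a, b⁆ = c) :
    genQ L P a * genQ L P b - genQ L P b * genQ L P a =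
      (PowerSeries.X : PowerSeries ℂ) • genQ L P c := by
  have h2 := congrArg (RingQuot.mkAlgHom (PowerSeries ℂ)
    (fun a b : Uh L => a = P - 1 ∧ b = 0)) (genU_rel L a b c h)
  simpa only [map_sub, map_mul, map_smul, genQ] using h2

set_option maxHeartbeats 4000000 in
theorem star_product_on_xy_monomials
    (X Y Z : L) (B : Module.Basis (Fin 3) ℂ L)
    (hB : B 0 = X ∧ B 1 = Y ∧ B 2 = Z)
    (hXY : ⁅X, Y⁆ = Z) (hYZ : ⁅Y, Z⁆ = X) (hZX : ⁅Z, X⁆ = Y)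
    (P : Uh L) (hP : P = genU L X ^ 2 + genU L Y ^ 2 + genU L Z ^ 2)
    (n m r s : ℕ) :
    ∃ u : quotOrbit L P,
      (genQ L P X ^ n * genQ L P Y ^ m) * (genQ L P X ^ r * genQ L P Y ^ s) =
        genQ L P X ^ (n + r) * genQ L P Y ^ (m + s)
          - (((m * r : ℕ) : PowerSeries ℂ) * PowerSeries.X) •
              (genQ L P Z * genQ L P X ^ (n + r - 1) * genQ L P Y ^ (m + s - 1))
          + ((PowerSeries.X : PowerSeries ℂ) ^ 2) • u := by
  set hh : PowerSeries ℂ := PowerSeries.X with hhh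
  set qx := genQ L P X
  set qy := genQ L P Y
  set qz := genQ L P Z
  have hyx : qy * qx = qx * qy - hh • qz := by
    rw [← genQ_rel L P X Y Z hXY]; abel
  have hzy : qz * qy = qy * qz - hh • qx := by
    rw [← genQ_rel L P Y Z X hYZ]; abel
  have hxz : qx * qz = qz * qx - hh • qy := by
    rw [← genQ_rel L P Z X Y hZX]; abel
  match m, r with
  | 0, r =>
    refine ⟨0, ?_⟩
    simp [pow_add, mul_assoc]
  | m + 1, 0 =>
    refine ⟨0, ?_⟩
    simp [pow_add, mul_assoc]
  | m + 1, r + 1 =>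
    obtain ⟨u, hu⟩ := aux_main hyx hzy hxz m r
    obtain ⟨w, hw⟩ := aux_swap_pow (a := qx) (b := qz) (c := qy)
      (by rw [hxz, sub_add_cancel]) n
    have hxnz : qx ^ n * qz = qz * qx ^ n - hh • w := by
      rw [hw]; rw [add_sub_cancel_right]
    refine ⟨((m + 1) * (r + 1)) • (w * qx ^ r * qy ^ (m + s)) + qx ^ n * u * qy ^ s, ?_⟩
    have hidx1 : n + (r + 1) - 1 = n + r := by omega
    have hidx2 : m + 1 + s - 1 = m + s := by omega
    rw [hidx1, hidx2]
    have key : qx ^ n * (qz * qx ^ r * qy ^ m) * qy ^ s =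
        qz * qx ^ (n + r) * qy ^ (m + s) - hh • (w * qx ^ r * qy ^ (m + s)) := by
      calc qx ^ n * (qz * qx ^ r * qy ^ m) * qy ^ s
          = (qx ^ n * qz) * qx ^ r * (qy ^ m * qy ^ s) := by
            simp only [mul_assoc]
        _ = (qz * qx ^ n - hh • w) * qx ^ r * qy ^ (m + s) := by
            rw [hxnz, ← pow_add]
        _ = qz * qx ^ (n + r) * qy ^ (m + s) - hh • (w * qx ^ r * qy ^ (m + s)) := by
            rw [sub_mul, sub_mul, smul_mul_assoc, smul_mul_assoc, mul_assoc qz, ← pow_add]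
    calc (qx ^ n * qy ^ (m + 1)) * (qx ^ (r + 1) * qy ^ s)
        = qx ^ n * (qy ^ (m + 1) * qx ^ (r + 1)) * qy ^ s := by
          rw [mul_assoc, ← mul_assoc (qy ^ (m + 1)), ← mul_assoc, mul_assoc]
      _ = qx ^ n * (qx ^ (r + 1) * qy ^ (m + 1)
            - ((m + 1) * (r + 1)) • hh • (qz * qx ^ r * qy ^ m) + hh • hh • u) * qy ^ s := by
          rw [hu]
      _ = qx ^ (n + (r + 1)) * qy ^ (m + 1 + s)
            - ((m + 1) * (r + 1)) • hh • (qx ^ n * (qz * qx ^ r * qy ^ m) * qy ^ s)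
            + hh • hh • (qx ^ n * u * qy ^ s) := by
          rw [mul_add, add_mul, mul_sub, sub_mul, mul_smul_comm, mul_smul_comm,
            smul_mul_assoc, smul_mul_assoc, mul_smul_comm, mul_smul_comm,
            smul_mul_assoc, smul_mul_assoc]
          simp only [pow_add, pow_one, mul_assoc]
      _ = qx ^ (n + (r + 1)) * qy ^ (m + 1 + s)
            - (((m + 1) * (r + 1) : ℕ) * hh) • (qz * qx ^ (n + r) * qy ^ (m + s))
            + (hh ^ 2) • (((m + 1) * (r + 1)) • (w * qx ^ r * qy ^ (m + s))
                + qx ^ n * u * qy ^ s) := by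
          rw [key]
          match_scalars <;> ring
end
end

section
/- Let G be a semisimple Lie algebra and let ⋆ be a star product on polynomials on G* constructed from the decomposition ℂ[G*] ≅ I ⊗ ℂ[Θ] (invariants tensor harmonic polynomials) via the map ψ((p_{i₁}−c⁰_{i₁})⋯(p_{i_k}−c⁰_{i_k}) ⊗ x_{j₁}⋯x_{j_l}) = (P_{i₁}−c_{i₁}(h))⋯(P_{i_k}−c_{i_k}(h))·(X_{j₁}⋯X_{j_l}). Then for every invariant polynomial f ∈ I with c_i(h) = c_i⁰ constant, and every g ∈ ℂ[G*], one has g ⋆ f = g·f (the star product with a Casimir function is undeformed). -/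
/- STATEMENT 14: Let `G` be a semisimple Lie algebra and `⋆` the star product on
`ℂ[G*]` built from the Kostant decomposition `ℂ[G*] ≅ I ⊗ ℂ[Θ]` (invariants tensor
harmonic polynomials) via
`ψ((p_{i₁}−c⁰_{i₁})⋯(p_{i_k}−c⁰_{i_k}) ⊗ x_{j₁}⋯x_{j_l})
   = (P_{i₁}−c_{i₁}(h))⋯(P_{i_k}−c_{i_k}(h))·(X_{j₁}⋯X_{j_l})`,
with the constant choice `cᵢ(h) = cᵢ⁰`.  Then for every invariant polynomial `f`
(a polynomial in the `pᵢ`) and every `g`, one has `g ⋆ f = g·f`. -/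

set_option synthInstance.maxHeartbeats 1000000
set_option maxSynthPendingDepth 3
set_option maxHeartbeats 1000000

noncomputable section

open TensorAlgebra
open scoped TensorProduct

variable (L : Type*) [LieRing L] [LieAlgebra ℂ L]

def kirillovBracket {n : ℕ} (cst : Fin n → Fin n → Fin n → ℂ)
    (f g : MvPolynomial (Fin n) ℂ) : MvPolynomial (Fin n) ℂ :=
  ∑ i, ∑ j, ∑ k, cst i j k • (MvPolynomial.X k * MvPolynomial.pderiv i f * MvPolynomial.pderiv j g)

open MvPolynomial in
theorem star_with_invariant_is_undeformed
    {n m : ℕ} [LieAlgebra.IsSemisimple ℂ L]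
    (B : Module.Basis (Fin n) ℂ L) (cst : Fin n → Fin n → Fin n → ℂ)
    (hcst : ∀ i j, ⁅B i, B j⁆ = ∑ k, cst i j k • B k)
    -- the invariant generators `pᵢ` and their quantizations `Pᵢ = Sym pᵢ`, central
    (p : Fin m → MvPolynomial (Fin n) ℂ)
    (hai : AlgebraicIndependent ℂ p)
    (hinv : ∀ i g, kirillovBracket cst (p i) g = 0)
    (P : Fin m → Uh L)
    (hcent : ∀ (i : Fin m) (u : Uh L), P i * u = u * P i)
    (c0 : Fin m → ℂ)
    -- the Kostant decomposition: a basis of `ℂ[G*]` of products of invariants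
    -- `∏(pᵢ − cᵢ⁰)` with harmonic polynomials `hb j`
    (κ : Type*) (hb : κ → MvPolynomial (Fin n) ℂ) (j₀ : κ) (hb₀ : hb j₀ = 1)
    (Bas : Module.Basis (Multiset (Fin m) × κ) ℂ (MvPolynomial (Fin n) ℂ))
    (hBas : ∀ (s : Multiset (Fin m)) (j : κ),
      Bas (s, j) = (s.map fun i => p i - C (c0 i)).prod * hb j)
    -- the map `ψ` of Eq. (tsp), with the constant choice `cᵢ(h) = cᵢ⁰`
    (Q : κ → Uh L) (hQ₀ : Q j₀ = 1)
    (ψ : ((PowerSeries ℂ) ⊗[ℂ] MvPolynomial (Fin n) ℂ) ≃ₗ[PowerSeries ℂ] Uh L)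
    (hψ : ∀ (s : Multiset (Fin m)) (j : κ),
      ψ ((1 : PowerSeries ℂ) ⊗ₜ[ℂ] Bas (s, j)) =
        ((s.toList.map fun i =>
            P i - algebraMap (PowerSeries ℂ) (Uh L) (PowerSeries.C (c0 i))).prod) * Q j) :
    -- the star product of any `g` with an invariant `f` is the classical product:
    -- `g ⋆ f = g·f`
    ∀ (g f : MvPolynomial (Fin n) ℂ), f ∈ Algebra.adjoin ℂ (Set.range p) →
      ψ.symm (ψ ((1 : PowerSeries ℂ) ⊗ₜ[ℂ] g) * ψ ((1 : PowerSeries ℂ) ⊗ₜ[ℂ] f)) =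
        (1 : PowerSeries ℂ) ⊗ₜ[ℂ] (g * f) := by
  classical
  have hFf : (fun i => P i - algebraMap (PowerSeries ℂ) (Uh L) (PowerSeries.C (c0 i)))
      = (fun i => P i - algebraMap (PowerSeries ℂ) (Uh L) (PowerSeries.C (c0 i))) := rfl
  set Ff : Fin m → Uh L :=
    fun i => P i - algebraMap (PowerSeries ℂ) (Uh L) (PowerSeries.C (c0 i)) with hFfdef
  have centr : ∀ (i : Fin m) (u : Uh L), u * Ff i = Ff i * u := by
    intro i u
    simp only [hFfdef, mul_sub, sub_mul, ← hcent i u, ← Algebra.commutes]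
  have pairwiseC : ∀ (l : List (Fin m)), (l.map Ff).Pairwise Commute := by
    intro l
    induction l with
    | nil => simp
    | cons a l ih =>
      simp only [List.map_cons, List.pairwise_cons]
      refine ⟨fun b _ => (centr a b).symm, ih⟩
  have prodcons : ∀ (i : Fin m) (s : Multiset (Fin m)),
      (((i ::ₘ s).toList).map Ff).prod = Ff i * ((s.toList.map Ff)).prod := by
    intro i s
    have hperm : List.Perm ((i ::ₘ s).toList) (i :: s.toList) := by
      rw [← Multiset.coe_eq_coe, Multiset.coe_toList, ← Multiset.cons_coe, Multiset.coe_toList]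
    rw [(hperm.map Ff).prod_eq' (pairwiseC _), List.map_cons, List.prod_cons]
  have hψ' : ∀ (s : Multiset (Fin m)) (j : κ),
      ψ ((1 : PowerSeries ℂ) ⊗ₜ[ℂ] Bas (s, j)) = (s.toList.map Ff).prod * Q j := hψ
  -- star with a basis invariant generator
  have keyB : ∀ (i : Fin m) (s : Multiset (Fin m)) (j : κ),
      ψ ((1 : PowerSeries ℂ) ⊗ₜ[ℂ] Bas (s, j)) * Ff i =
        ψ ((1 : PowerSeries ℂ) ⊗ₜ[ℂ] ((p i - C (c0 i)) * Bas (s, j))) := by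
    intro i s j
    have h1 : (p i - C (c0 i)) * Bas (s, j) = Bas (i ::ₘ s, j) := by
      rw [hBas, hBas, Multiset.map_cons, Multiset.prod_cons, mul_assoc]
    rw [h1, hψ', hψ', prodcons, mul_assoc, centr i (Q j), ← mul_assoc, ← centr i]
  have tm : ∀ (a : ℂ) (h : MvPolynomial (Fin n) ℂ),
      (1 : PowerSeries ℂ) ⊗ₜ[ℂ] (a • h)
        = (algebraMap ℂ (PowerSeries ℂ) a) • ((1 : PowerSeries ℂ) ⊗ₜ[ℂ] h) := by
    intro a h
    rw [← TensorProduct.smul_tmul, TensorProduct.smul_tmul']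
    congr 1
    rw [smul_eq_mul, mul_one, Algebra.algebraMap_eq_smul_one]
  have key : ∀ (i : Fin m) (g : MvPolynomial (Fin n) ℂ),
      ψ ((1 : PowerSeries ℂ) ⊗ₜ[ℂ] g) * Ff i =
        ψ ((1 : PowerSeries ℂ) ⊗ₜ[ℂ] ((p i - C (c0 i)) * g)) := by
    intro i g
    have hg : g = ∑ x ∈ (Bas.repr g).support, (Bas.repr g) x • Bas x := by
      conv_lhs => rw [← Module.Basis.linearCombination_repr Bas g]
      rw [Finsupp.linearCombination_apply, Finsupp.sum]
    rw [hg]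
    simp only [Finset.mul_sum, mul_smul_comm, TensorProduct.tmul_sum, map_sum, Finset.sum_mul,
      tm, map_smul, smul_mul_assoc]
    refine Finset.sum_congr rfl fun x _ => ?_
    congr 1
    have := keyB i x.1 x.2
    simpa using this
  -- value on constants
  have hone : ψ ((1 : PowerSeries ℂ) ⊗ₜ[ℂ] (1 : MvPolynomial (Fin n) ℂ)) = 1 := by
    have h0 : Bas (0, j₀) = 1 := by
      rw [hBas, Multiset.map_zero, Multiset.prod_zero, one_mul, hb₀]
    have := hψ' 0 j₀
    rw [h0] at this
    simpa [hQ₀] using this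
  have hC : ∀ (a : ℂ), ψ ((1 : PowerSeries ℂ) ⊗ₜ[ℂ] (C a : MvPolynomial (Fin n) ℂ))
      = algebraMap ℂ (PowerSeries ℂ) a • 1 := by
    intro a
    have : (C a : MvPolynomial (Fin n) ℂ) = a • 1 := by
      rw [MvPolynomial.smul_eq_C_mul, mul_one]
    rw [this, tm, map_smul, hone]
  have constCase : ∀ (a : ℂ) (g : MvPolynomial (Fin n) ℂ),
      ψ ((1 : PowerSeries ℂ) ⊗ₜ[ℂ] g) * ψ ((1 : PowerSeries ℂ) ⊗ₜ[ℂ] (C a : MvPolynomial (Fin n) ℂ))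
        = ψ ((1 : PowerSeries ℂ) ⊗ₜ[ℂ] (g * C a)) := by
    intro a g
    rw [hC, mul_smul_comm, mul_one]
    have : g * C a = a • g := by rw [MvPolynomial.smul_eq_C_mul, mul_comm]
    rw [this, tm, map_smul]
  have claim : ∀ f ∈ Algebra.adjoin ℂ (Set.range p), ∀ g : MvPolynomial (Fin n) ℂ,
      ψ ((1 : PowerSeries ℂ) ⊗ₜ[ℂ] g) * ψ ((1 : PowerSeries ℂ) ⊗ₜ[ℂ] f)
        = ψ ((1 : PowerSeries ℂ) ⊗ₜ[ℂ] (g * f)) := by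
    intro f hf
    induction hf using Algebra.adjoin_induction with
    | mem x hx =>
      obtain ⟨i, rfl⟩ := hx
      intro g
      have hp : p i = (p i - C (c0 i)) + C (c0 i) := by ring
      have hFi : ψ ((1 : PowerSeries ℂ) ⊗ₜ[ℂ] (p i - C (c0 i))) = Ff i := by
        have h1 : Bas ({i}, j₀) = p i - C (c0 i) := by
          rw [hBas, Multiset.map_singleton, Multiset.prod_singleton, hb₀, mul_one]
        have := hψ' {i} j₀
        rw [h1, hQ₀, mul_one] at this
        rw [this]
        show ((i ::ₘ 0).toList.map Ff).prod = Ff i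
        rw [prodcons]
        simp
      conv_lhs => rw [hp]
      rw [TensorProduct.tmul_add, map_add, mul_add, hFi, key, constCase]
      rw [← map_add, ← TensorProduct.tmul_add]
      congr 2
      ring
    | algebraMap a =>
      intro g
      rw [MvPolynomial.algebraMap_eq]
      exact constCase a g
    | add x y hx hy ihx ihy =>
      intro g
      rw [TensorProduct.tmul_add, map_add, mul_add, ihx g, ihy g, ← map_add,
        ← TensorProduct.tmul_add, mul_add]
    | mul x y hx hy ihx ihy =>
      intro g
      have hxy : ψ ((1 : PowerSeries ℂ) ⊗ₜ[ℂ] (x * y))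
          = ψ ((1 : PowerSeries ℂ) ⊗ₜ[ℂ] x) * ψ ((1 : PowerSeries ℂ) ⊗ₜ[ℂ] y) :=
        (ihy x).symm
      rw [hxy, ← mul_assoc, ihx g, ihy (g * x), mul_assoc]
  intro g f hf
  rw [claim f hf g, LinearEquiv.symm_apply_apply]

end
end
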